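/- Let A be an n×n matrix and B an m×m matrix over ℂ. Then the spectrum (set of eigenvalues) of the Kronecker sum A ⊗ I_m + I_n ⊗ B equals the set of sums {λ + μ : λ is an eigenvalue of A, μ is an eigenvalue of B}. -/

import Mathlib

open Matrix Kronecker Polynomial

-- eigenvalue iff det vanishes
lemma eig_iff_det {k : ℕ} (M : Matrix (Fin k) (Fin k) ℂ) (μ : ℂ) :
    (∃ v : Fin k → ℂ, v ≠ 0 ∧ M *ᵥ v = μ • v) ↔ (μ • (1 : Matrix (Fin k) (Fin k) ℂ) - M).det = 0 := by
  rw [← Matrix.exists_mulVec_eq_zero_iff]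
  constructor
  · rintro ⟨v, hv, h⟩
    exact ⟨v, hv, by simp [Matrix.sub_mulVec, Matrix.smul_mulVec, h]⟩
  · rintro ⟨v, hv, h⟩
    refine ⟨v, hv, ?_⟩
    have := h
    simp [Matrix.sub_mulVec, Matrix.smul_mulVec, sub_eq_zero] at this
    simpa using this.symm

-- eval of charpoly
lemma charpoly_eval {k : ℕ} (M : Matrix (Fin k) (Fin k) ℂ) (μ : ℂ) :
    M.charpoly.eval μ = (μ • (1 : Matrix (Fin k) (Fin k) ℂ) - M).det := by
  rw [Matrix.charpoly, _root_.eval_det, matPolyEquiv_charmatrix]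
  congr 1
  ext i j
  by_cases h : i = j <;>
    simp [Matrix.scalar_apply, Matrix.one_apply, h, Matrix.diagonal_apply, Matrix.smul_apply]

lemma aeval_comm {k l : ℕ} (A : Matrix (Fin k) (Fin k) ℂ) (C : Matrix (Fin l) (Fin l) ℂ)
    (X : Matrix (Fin k) (Fin l) ℂ) (h : A * X = X * C) (p : ℂ[X]) :
    (Polynomial.aeval A p) * X = X * (Polynomial.aeval C p) := by
  induction p using Polynomial.induction_on with
  | C a => simp [Algebra.algebraMap_eq_smul_one, Matrix.smul_mul, Matrix.mul_smul]
  | add p q hp hq => rw [map_add, map_add, Matrix.add_mul, Matrix.mul_add, hp, hq]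
  | monomial n a ih =>
      rw [pow_succ, ← mul_assoc, _root_.map_mul (Polynomial.aeval A) (Polynomial.C a * Polynomial.X ^ n) Polynomial.X,
        _root_.map_mul (Polynomial.aeval C) (Polynomial.C a * Polynomial.X ^ n) Polynomial.X,
        Polynomial.aeval_X, Polynomial.aeval_X, Matrix.mul_assoc _ A X, h,
        ← Matrix.mul_assoc, ih, Matrix.mul_assoc]

/-- Over `ℂ`, the set of eigenvalues of the Kronecker sum
`A ⊗ I_m + I_n ⊗ B` is exactly the set of sums `λ + μ` of an eigenvalue `λ` of `A` and an
eigenvalue `μ` of `B` (an eigenvalue of `M` being a scalar `z` with `M x = z • x` for some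
nonzero `x`). -/
theorem eigenvalues_kroneckerSum {n m : ℕ} (A : Matrix (Fin n) (Fin n) ℂ)
    (B : Matrix (Fin m) (Fin m) ℂ) :
    {z : ℂ | ∃ x : Fin n × Fin m → ℂ, x ≠ 0 ∧
        (A ⊗ₖ (1 : Matrix (Fin m) (Fin m) ℂ) + (1 : Matrix (Fin n) (Fin n) ℂ) ⊗ₖ B) *ᵥ x
          = z • x} =
      {z : ℂ | ∃ lam mu : ℂ, (∃ v : Fin n → ℂ, v ≠ 0 ∧ A *ᵥ v = lam • v) ∧
        (∃ w : Fin m → ℂ, w ≠ 0 ∧ B *ᵥ w = mu • w) ∧ z = lam + mu} := by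
  have key : ∀ (x : Fin n × Fin m → ℂ) (p : Fin n × Fin m),
      ((A ⊗ₖ (1 : Matrix (Fin m) (Fin m) ℂ) + (1 : Matrix (Fin n) (Fin n) ℂ) ⊗ₖ B) *ᵥ x) p
        = (A * Matrix.of (fun i j => x (i, j)) + Matrix.of (fun i j => x (i, j)) * Bᵀ) p.1 p.2 := by
    intro x p
    obtain ⟨i, j⟩ := p
    simp [Matrix.mulVec, Matrix.add_mulVec, Matrix.mul_apply, dotProduct,
      Fintype.sum_prod_type, Matrix.one_apply, Finset.mul_sum, mul_comm, add_mul,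
      Finset.sum_add_distrib, Finset.sum_ite_eq, ite_mul]
  ext z
  simp only [Set.mem_setOf_eq]
  constructor
  · rintro ⟨x, hx, hxe⟩
    set X : Matrix (Fin n) (Fin m) ℂ := Matrix.of (fun i j => x (i, j)) with hX
    have hXne : X ≠ 0 := by
      intro h
      apply hx
      funext p
      have := congrFun (congrFun h p.1) p.2
      simpa [hX] using this
    have hrel : A * X + X * Bᵀ = z • X := by
      ext i j
      have := congrFun hxe (i, j)
      rw [key] at this
      simpa [hX] using this
    -- A * X = X * C with C = z•1 - Bᵀ
    set C : Matrix (Fin m) (Fin m) ℂ := z • (1 : Matrix (Fin m) (Fin m) ℂ) - Bᵀ with hC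
    have hAXC : A * X = X * C := by
      rw [hC, Matrix.mul_sub, Matrix.mul_smul, Matrix.mul_one, ← hrel]
      abel
    have hp := Matrix.aeval_self_charpoly A
    have h0 : X * (Polynomial.aeval C A.charpoly) = 0 := by
      rw [← aeval_comm A C X hAXC, hp, Matrix.zero_mul]
    have hdet : (Polynomial.aeval C A.charpoly).det = 0 := by
      by_contra hd
      have hu : IsUnit (Polynomial.aeval C A.charpoly).det := isUnit_iff_ne_zero.mpr hd
      have := congrArg (· * (Polynomial.aeval C A.charpoly)⁻¹) h0
      simp only [Matrix.zero_mul, Matrix.mul_assoc, Matrix.mul_nonsing_inv _ hu,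
        Matrix.mul_one] at this
      exact hXne this
    -- factor charpoly over ℂ
    have hmon := A.charpoly_monic
    have hsplit : A.charpoly.Splits := IsAlgClosed.splits _
    have hfac := hsplit.eq_prod_roots_of_monic hmon
    set L := A.charpoly.roots.toList with hL
    have hfacL : A.charpoly = (L.map (fun a => Polynomial.X - Polynomial.C a)).prod := by
      rw [hfac]
      conv_lhs => rw [← Multiset.coe_toList A.charpoly.roots]
      rw [Multiset.map_coe, Multiset.prod_coe, hL]
    rw [hfacL] at hdet
    have hdetL : (L.map (fun a => (Polynomial.aeval C (Polynomial.X - Polynomial.C a)).det)).prod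
        = 0 := by
      have h1 : Polynomial.aeval C ((L.map (fun a => Polynomial.X - Polynomial.C a)).prod)
          = (L.map (fun a => Polynomial.aeval C (Polynomial.X - Polynomial.C a))).prod := by
        rw [map_list_prod, List.map_map]; rfl
      have h2 := hdet
      rw [h1, ← Matrix.coe_detMonoidHom, map_list_prod, List.map_map] at h2
      simpa [Matrix.coe_detMonoidHom] using h2
    obtain ⟨lam, hlamL, hd0⟩ := List.mem_map.mp (List.prod_eq_zero_iff.mp hdetL)
    have hlam : lam ∈ A.charpoly.roots := by rwa [hL, Multiset.mem_toList] at hlamL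
    have heq : (Polynomial.aeval C (Polynomial.X - Polynomial.C lam))
        = ((z - lam) • (1 : Matrix (Fin m) (Fin m) ℂ) - B)ᵀ := by
      rw [map_sub, Polynomial.aeval_X, Polynomial.aeval_C, hC]
      simp [Algebra.algebraMap_eq_smul_one, sub_smul, Matrix.transpose_sub, Matrix.transpose_smul]
      abel
    have hBdet : ((z - lam) • (1 : Matrix (Fin m) (Fin m) ℂ) - B).det = 0 := by
      rw [← Matrix.det_transpose, ← heq]; exact hd0
    have hAdet : (lam • (1 : Matrix (Fin n) (Fin n) ℂ) - A).det = 0 := by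
      have := Polynomial.isRoot_of_mem_roots hlam
      rw [Polynomial.IsRoot, charpoly_eval] at this
      exact this
    refine ⟨lam, z - lam, (eig_iff_det A lam).mpr hAdet, (eig_iff_det B (z - lam)).mpr hBdet, by ring⟩
  · rintro ⟨lam, mu, ⟨v, hv, hAv⟩, ⟨w, hw, hBw⟩, rfl⟩
    refine ⟨fun p => v p.1 * w p.2, ?_, ?_⟩
    · intro h
      obtain ⟨i, hi⟩ := Function.ne_iff.mp hv
      obtain ⟨j, hj⟩ := Function.ne_iff.mp hw
      have := congrFun h (i, j)
      simp only [Pi.zero_apply, mul_eq_zero] at this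
      tauto
    · funext p
      obtain ⟨i, j⟩ := p
      rw [key]
      have h1 : (A * Matrix.of fun i j => v i * w j) i j = lam * v i * w j := by
        have := congrFun hAv i
        simp only [Matrix.mulVec, dotProduct, Pi.smul_apply, smul_eq_mul] at this
        simp only [Matrix.mul_apply, Matrix.of_apply, ← mul_assoc, ← Finset.sum_mul, this]
      have h2 : ((Matrix.of fun i j => v i * w j) * Bᵀ) i j = mu * v i * w j := by
        have := congrFun hBw j
        simp only [Matrix.mulVec, dotProduct, Pi.smul_apply, smul_eq_mul] at this
        simp only [Matrix.mul_apply, Matrix.of_apply, Matrix.transpose_apply]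
        calc ∑ x, v i * w x * B j x = v i * ∑ x, B j x * w x := by
              rw [Finset.mul_sum]; exact Finset.sum_congr rfl (fun _ _ => by ring)
          _ = mu * v i * w j := by rw [this]; ring
      simp [h1, h2]
      ring
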